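/- (Conditional extension of the subadditivity inequality, used in the proof of Theorem A.1(d)) Let A and B be random variables taking finitely many real values and let C and D be finite-valued random variables. If A ⊥ B | D and A ⊥ B | (D, C), then I(A + B; C | D) ≤ I(A; C | D) + I(B; C | D). -/

import Mathlib

open MeasureTheory

namespace MarginalTransfer

variable {Ω : Type*} [MeasurableSpace Ω]

/-- `P(A) := μ(A)`, as a real number. -/
noncomputable def pr (μ : Measure Ω) (A : Set Ω) : ℝ := (μ A).toReal

/-- Conditional mutual information
`I(U;V|W) := Σ_{u,v,w} P(U=u, V=v, W=w) ·
  log( (P(U=u, V=v, W=w) · P(W=w)) / (P(U=u, W=w) · P(V=v, W=w)) )`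
for finitely-valued random variables; any summand whose leading factor
`P(U=u, V=v, W=w)` is zero vanishes. -/
noncomputable def condMI {α β γ : Type*} (μ : Measure Ω)
    (U : Ω → α) (V : Ω → β) (W : Ω → γ) : ℝ :=
  ∑' u : α, ∑' v : β, ∑' w : γ,
    pr μ {ω | U ω = u ∧ V ω = v ∧ W ω = w} *
      Real.log (pr μ {ω | U ω = u ∧ V ω = v ∧ W ω = w} * pr μ {ω | W ω = w} /
        (pr μ {ω | U ω = u ∧ W ω = w} * pr μ {ω | V ω = v ∧ W ω = w}))

/-- Unconditional mutual information `I(U;V)`: the same formula with `W` a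
constant random variable. -/
noncomputable def mutualInfo {α β : Type*} (μ : Measure Ω)
    (U : Ω → α) (V : Ω → β) : ℝ :=
  condMI μ U V (fun _ => (() : Unit))

/-- Conditional independence `U ⟂ V ∣ W`:
`P(U=u, V=v, W=w) · P(W=w) = P(U=u, W=w) · P(V=v, W=w)` for all `u, v, w`. -/
def CondIndep {α β γ : Type*} (μ : Measure Ω)
    (U : Ω → α) (V : Ω → β) (W : Ω → γ) : Prop :=
  ∀ u v w,
    pr μ {ω | U ω = u ∧ V ω = v ∧ W ω = w} * pr μ {ω | W ω = w} =
      pr μ {ω | U ω = u ∧ W ω = w} * pr μ {ω | V ω = v ∧ W ω = w}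

/-- Unconditional independence `U ⟂ V`: conditional independence given a
constant random variable. -/
def Indep {α β : Type*} (μ : Measure Ω) (U : Ω → α) (V : Ω → β) : Prop :=
  CondIndep μ U V (fun _ => (() : Unit))

/-- Shannon entropy `H(U) := −Σ_u P(U=u) · log P(U=u)`. -/
noncomputable def entropy {α : Type*} (μ : Measure Ω) (U : Ω → α) : ℝ :=
  -∑' u : α, pr μ {ω | U ω = u} * Real.log (pr μ {ω | U ω = u})

/-- Conditional Shannon entropy
`H(U|V) := −Σ_{u,v} P(U=u, V=v) · log( P(U=u, V=v) / P(V=v) )`. -/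
noncomputable def condEntropy {α β : Type*} (μ : Measure Ω)
    (U : Ω → α) (V : Ω → β) : ℝ :=
  -∑' u : α, ∑' v : β,
    pr μ {ω | U ω = u ∧ V ω = v} *
      Real.log (pr μ {ω | U ω = u ∧ V ω = v} / pr μ {ω | V ω = v})

end MarginalTransfer

open MarginalTransfer

/-!
Under the two independence assumptions the pointwise information of the pair `(A, B)` about `C`
given `D` is the sum of those of `A` and of `B`, because the joint laws given `D` and given
`(D, C)` both factorise; hence `I((A, B); C | D) = I(A; C | D) + I(B; C | D)`. Since `A + B` is a
function of `(A, B)`, the data-processing inequality `I(g(X); C | D) ≤ I(X; C | D)`, which is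
Gibbs' inequality for the difference of the two sums, finishes the proof.
-/

lemma Real.sub_le_mul_log_div {x y : ℝ} (hx : 0 ≤ x) (hy : 0 ≤ y) (hxy : 0 < x → 0 < y) :
    x - y ≤ x * Real.log (x / y) := by
  rcases hx.eq_or_lt with rfl | hx
  · simpa using hy
  have hlog := Real.one_sub_inv_le_log_of_pos (div_pos hx (hxy hx))
  rw [inv_div] at hlog
  calc x - y = x * (1 - y / x) := by field_simp
    _ ≤ x * Real.log (x / y) := mul_le_mul_of_nonneg_left hlog hx.le

namespace MarginalTransfer

section Probability

variable {Ω : Type*} [MeasurableSpace Ω] (μ : Measure Ω)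

lemma pr_nonneg (E : Set Ω) : 0 ≤ pr μ E := ENNReal.toReal_nonneg

lemma pr_pos_of_subset [IsFiniteMeasure μ] {E F : Set Ω} (hE : 0 < pr μ E) (h : E ⊆ F) :
    0 < pr μ F :=
  hE.trans_le (ENNReal.toReal_mono (measure_ne_top _ _) (measure_mono h))

lemma pr_congr {P Q : Ω → Prop} (h : ∀ ω, P ω ↔ Q ω) : pr μ {ω | P ω} = pr μ {ω | Q ω} := by
  rw [Set.ext h]

lemma pr_eq_sum_fiber [IsFiniteMeasure μ] {ι : Type*} [MeasurableSpace ι]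
    [MeasurableSingletonClass ι] {X : Ω → ι} (hX : Measurable X) {S : Finset ι}
    (hS : ∀ ω, X ω ∈ S) (P : Ω → Prop) :
    pr μ {ω | P ω} = ∑ x ∈ S, pr μ {ω | X ω = x ∧ P ω} := by
  have hcover : X ⁻¹' S = Set.univ := Set.eq_univ_of_forall hS
  have hsum := sum_measure_preimage_singleton (μ := μ.restrict {ω | P ω}) S
    fun x _ => hX (measurableSet_singleton x)
  rw [hcover, Measure.restrict_apply_univ] at hsum
  simp only [pr, ← hsum, Measure.restrict_apply (hX (measurableSet_singleton _))]
  exact ENNReal.toReal_sum fun _ _ => measure_ne_top _ _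

lemma pr_and_eq_sum_fiber [IsFiniteMeasure μ] {β : Type*} [Fintype β] [MeasurableSpace β]
    [MeasurableSingletonClass β] {V : Ω → β} (hV : Measurable V) (P Q : Ω → Prop) :
    pr μ {ω | P ω ∧ Q ω} = ∑ v, pr μ {ω | P ω ∧ V ω = v ∧ Q ω} := by
  rw [pr_eq_sum_fiber μ hV (S := Finset.univ) fun ω => Finset.mem_univ _]
  exact Finset.sum_congr rfl fun v _ => pr_congr μ fun ω => and_left_comm

lemma pr_comp_eq_sum_fiber [IsFiniteMeasure μ] {ι α : Type*} [DecidableEq α] [MeasurableSpace ι]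
    [MeasurableSingletonClass ι] {X : Ω → ι} (hX : Measurable X) {S : Finset ι}
    (hS : ∀ ω, X ω ∈ S) (g : ι → α) (u : α) (P : Ω → Prop) :
    pr μ {ω | g (X ω) = u ∧ P ω} = ∑ x ∈ S with g x = u, pr μ {ω | X ω = x ∧ P ω} := by
  rw [pr_eq_sum_fiber μ hX hS, Finset.sum_filter]
  refine Finset.sum_congr rfl fun x _ => ?_
  split_ifs with hx
  · exact pr_congr μ fun ω => ⟨fun h => ⟨h.1, h.2.2⟩, fun h => ⟨h.1, h.1 ▸ hx, h.2⟩⟩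
  · have hempty : {ω | X ω = x ∧ g (X ω) = u ∧ P ω} = ∅ :=
      Set.eq_empty_of_forall_notMem fun ω h => hx (h.1 ▸ h.2.1)
    simp [hempty, pr]

end Probability

section MutualInformation

variable {Ω α β γ : Type*} [MeasurableSpace Ω] (μ : Measure Ω)

noncomputable def condPMI (U : Ω → α) (V : Ω → β) (W : Ω → γ) (u : α) (v : β) (w : γ) : ℝ :=
  Real.log (pr μ {ω | U ω = u ∧ V ω = v ∧ W ω = w} * pr μ {ω | W ω = w} /
    (pr μ {ω | U ω = u ∧ W ω = w} * pr μ {ω | V ω = v ∧ W ω = w}))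

lemma condPMI_pair_eq_add [IsFiniteMeasure μ] {α₁ α₂ : Type*} {A : Ω → α₁} {B : Ω → α₂}
    {V : Ω → β} {W : Ω → γ} (hW : CondIndep μ A B W)
    (hWV : CondIndep μ A B fun ω => (W ω, V ω)) {a : α₁} {b : α₂} {v : β} {w : γ}
    (hq : 0 < pr μ {ω | A ω = a ∧ B ω = b ∧ V ω = v ∧ W ω = w}) :
    condPMI μ (fun ω => (A ω, B ω)) V W (a, b) v w =
      condPMI μ A V W a v w + condPMI μ B V W b v w := by
  have hAVW : 0 < pr μ {ω | A ω = a ∧ V ω = v ∧ W ω = w} :=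
    pr_pos_of_subset μ hq fun ω h => ⟨h.1, h.2.2⟩
  have hBVW : 0 < pr μ {ω | B ω = b ∧ V ω = v ∧ W ω = w} := pr_pos_of_subset μ hq fun ω h => h.2
  have hAW : 0 < pr μ {ω | A ω = a ∧ W ω = w} := pr_pos_of_subset μ hq fun ω h => ⟨h.1, h.2.2.2⟩
  have hBW : 0 < pr μ {ω | B ω = b ∧ W ω = w} :=
    pr_pos_of_subset μ hq fun ω h => ⟨h.2.1, h.2.2.2⟩
  have hABW : 0 < pr μ {ω | A ω = a ∧ B ω = b ∧ W ω = w} :=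
    pr_pos_of_subset μ hq fun ω h => ⟨h.1, h.2.1, h.2.2.2⟩
  have hVW : 0 < pr μ {ω | V ω = v ∧ W ω = w} := pr_pos_of_subset μ hq fun ω h => h.2.2
  have hW' : 0 < pr μ {ω | W ω = w} := pr_pos_of_subset μ hq fun ω h => h.2.2.2
  have indepW := hW a b w
  have indepWV : pr μ {ω | A ω = a ∧ B ω = b ∧ V ω = v ∧ W ω = w} * pr μ {ω | V ω = v ∧ W ω = w}
      = pr μ {ω | A ω = a ∧ V ω = v ∧ W ω = w} * pr μ {ω | B ω = b ∧ V ω = v ∧ W ω = w} := by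
    convert hWV a b (w, v) using 3 <;> ext ω <;> simp only [Set.mem_ofPred_eq, Prod.mk.injEq] <;>
      tauto
  simp only [condPMI, Prod.mk.injEq, and_assoc]
  rw [← Real.log_mul (by positivity) (by positivity)]
  congr 1
  field_simp
  linear_combination pr μ {ω | A ω = a ∧ W ω = w} * pr μ {ω | B ω = b ∧ W ω = w} * indepWV -
    pr μ {ω | A ω = a ∧ V ω = v ∧ W ω = w} * pr μ {ω | B ω = b ∧ V ω = v ∧ W ω = w} * indepW

/-- The subtracted term is `P(X = x, W = w) · P(V = v | g X = g x, W = w)`, a sub-probability in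
`(x, v, w)`, against which Gibbs' inequality is applied. -/
lemma sub_le_mul_condPMI_sub_condPMI_comp [IsFiniteMeasure μ] {ι : Type*} (X : Ω → ι)
    (V : Ω → β) (W : Ω → γ) (g : ι → α) (x : ι) (v : β) (w : γ) :
    pr μ {ω | X ω = x ∧ V ω = v ∧ W ω = w} - pr μ {ω | X ω = x ∧ W ω = w} *
        (pr μ {ω | g (X ω) = g x ∧ V ω = v ∧ W ω = w} / pr μ {ω | g (X ω) = g x ∧ W ω = w}) ≤
      pr μ {ω | X ω = x ∧ V ω = v ∧ W ω = w} *
        (condPMI μ X V W x v w - condPMI μ (fun ω => g (X ω)) V W (g x) v w) := by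
  have hr : 0 ≤ pr μ {ω | X ω = x ∧ W ω = w} *
      (pr μ {ω | g (X ω) = g x ∧ V ω = v ∧ W ω = w} / pr μ {ω | g (X ω) = g x ∧ W ω = w}) :=
    mul_nonneg (pr_nonneg μ _) (div_nonneg (pr_nonneg μ _) (pr_nonneg μ _))
  rcases (pr_nonneg μ {ω | X ω = x ∧ V ω = v ∧ W ω = w}).eq_or_lt with hq | hq
  · simpa [← hq] using hr
  have hXW : 0 < pr μ {ω | X ω = x ∧ W ω = w} := pr_pos_of_subset μ hq fun ω h => ⟨h.1, h.2.2⟩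
  have hVW : 0 < pr μ {ω | V ω = v ∧ W ω = w} := pr_pos_of_subset μ hq fun ω h => h.2
  have hW : 0 < pr μ {ω | W ω = w} := pr_pos_of_subset μ hq fun ω h => h.2.2
  have hGVW : 0 < pr μ {ω | g (X ω) = g x ∧ V ω = v ∧ W ω = w} :=
    pr_pos_of_subset μ hq fun ω h => ⟨congrArg g h.1, h.2⟩
  have hGW : 0 < pr μ {ω | g (X ω) = g x ∧ W ω = w} :=
    pr_pos_of_subset μ hq fun ω h => ⟨congrArg g h.1, h.2.2⟩
  rw [condPMI, condPMI, ← Real.log_div (by positivity) (by positivity)]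
  convert Real.sub_le_mul_log_div hq.le hr fun _ => by positivity using 3
  field_simp

variable [Fintype β] [Fintype γ] {V : Ω → β} {W : Ω → γ}

lemma condMI_eq_sum {U : Ω → α} {T : Finset α} (hT : ∀ ω, U ω ∈ T) :
    condMI μ U V W = ∑ u ∈ T, ∑ v, ∑ w,
      pr μ {ω | U ω = u ∧ V ω = v ∧ W ω = w} * condPMI μ U V W u v w := by
  rw [condMI, tsum_eq_sum (s := T)]
  · simp only [tsum_fintype, condPMI]
  · intro u hu
    have hempty : ∀ v w, {ω | U ω = u ∧ V ω = v ∧ W ω = w} = ∅ := fun v w =>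
      Set.eq_empty_of_forall_notMem fun ω h => hu (h.1 ▸ hT ω)
    simp [hempty, pr]

lemma condMI_comp_eq_sum [IsFiniteMeasure μ] {ι : Type*} [MeasurableSpace ι]
    [MeasurableSingletonClass ι] {X : Ω → ι} (hX : Measurable X) {S : Finset ι}
    (hS : ∀ ω, X ω ∈ S) (g : ι → α) :
    condMI μ (fun ω => g (X ω)) V W = ∑ x ∈ S, ∑ v, ∑ w,
      pr μ {ω | X ω = x ∧ V ω = v ∧ W ω = w} * condPMI μ (fun ω => g (X ω)) V W (g x) v w := by
  classical
  rw [condMI_eq_sum μ (T := S.image g) fun ω => Finset.mem_image_of_mem g (hS ω),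
    ← Finset.sum_fiberwise_of_maps_to fun x hx => Finset.mem_image_of_mem g hx]
  refine Finset.sum_congr rfl fun u _ => ?_
  simp only [pr_comp_eq_sum_fiber μ hX hS g u, Finset.sum_mul]
  refine (Finset.sum_congr rfl fun v _ => Finset.sum_comm).trans (Finset.sum_comm.trans ?_)
  exact Finset.sum_congr rfl fun x hx => by rw [(Finset.mem_filter.1 hx).2]

theorem condMI_comp_le [IsFiniteMeasure μ] [MeasurableSpace β] [MeasurableSingletonClass β]
    (hV : Measurable V) {ι : Type*} [MeasurableSpace ι] [MeasurableSingletonClass ι]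
    {X : Ω → ι} (hX : Measurable X) (hXfin : (Set.range X).Finite) (g : ι → α) :
    condMI μ (fun ω => g (X ω)) V W ≤ condMI μ X V W := by
  have hS : ∀ ω, X ω ∈ hXfin.toFinset := fun ω => hXfin.mem_toFinset.2 ⟨ω, rfl⟩
  let r : ι → β → γ → ℝ := fun x v w => pr μ {ω | X ω = x ∧ W ω = w} *
    (pr μ {ω | g (X ω) = g x ∧ V ω = v ∧ W ω = w} / pr μ {ω | g (X ω) = g x ∧ W ω = w})
  have marginal : ∀ x w, ∑ v, r x v w ≤ ∑ v, pr μ {ω | X ω = x ∧ V ω = v ∧ W ω = w} := by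
    intro x w
    simp only [r, ← Finset.mul_sum, ← Finset.sum_div, ← pr_and_eq_sum_fiber μ hV]
    exact mul_le_of_le_one_right (pr_nonneg μ _) (div_self_le_one _)
  rw [condMI_comp_eq_sum μ hX hS g, condMI_eq_sum μ hS, ← sub_nonneg]
  calc (0 : ℝ)
      ≤ ∑ x ∈ hXfin.toFinset, ∑ v, ∑ w, (pr μ {ω | X ω = x ∧ V ω = v ∧ W ω = w} - r x v w) := by
        refine Finset.sum_nonneg fun x _ => ?_
        rw [Finset.sum_comm]
        refine Finset.sum_nonneg fun w _ => ?_
        rw [Finset.sum_sub_distrib]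
        exact sub_nonneg.2 (marginal x w)
    _ ≤ _ := by
        simp only [← Finset.sum_sub_distrib, ← mul_sub]
        exact Finset.sum_le_sum fun x _ => Finset.sum_le_sum fun v _ => Finset.sum_le_sum
          fun w _ => sub_le_mul_condPMI_sub_condPMI_comp μ X V W g x v w

theorem condMI_pair_eq_add_of_condIndep [IsFiniteMeasure μ] {α₁ α₂ : Type*}
    [MeasurableSpace α₁] [MeasurableSingletonClass α₁]
    [MeasurableSpace α₂] [MeasurableSingletonClass α₂] {A : Ω → α₁} {B : Ω → α₂}
    (hA : Measurable A) (hB : Measurable B)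
    (hAfin : (Set.range A).Finite) (hBfin : (Set.range B).Finite)
    (hW : CondIndep μ A B W) (hWV : CondIndep μ A B fun ω => (W ω, V ω)) :
    condMI μ (fun ω => (A ω, B ω)) V W = condMI μ A V W + condMI μ B V W := by
  set X := fun ω => (A ω, B ω)
  have hS : ∀ ω, X ω ∈ hAfin.toFinset ×ˢ hBfin.toFinset := fun ω =>
    Finset.mem_product.2 ⟨hAfin.mem_toFinset.2 ⟨ω, rfl⟩, hBfin.mem_toFinset.2 ⟨ω, rfl⟩⟩
  have hX : Measurable X := hA.prodMk hB
  rw [show condMI μ A V W = condMI μ (fun ω => (X ω).1) V W from rfl,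
    show condMI μ B V W = condMI μ (fun ω => (X ω).2) V W from rfl,
    condMI_eq_sum μ hS, condMI_comp_eq_sum μ hX hS Prod.fst,
    condMI_comp_eq_sum μ hX hS Prod.snd]
  simp only [← Finset.sum_add_distrib, ← mul_add]
  refine Finset.sum_congr rfl fun ⟨a, b⟩ _ => Finset.sum_congr rfl fun v _ =>
    Finset.sum_congr rfl fun w _ => ?_
  have hq : pr μ {ω | X ω = (a, b) ∧ V ω = v ∧ W ω = w} =
      pr μ {ω | A ω = a ∧ B ω = b ∧ V ω = v ∧ W ω = w} :=
    pr_congr μ fun ω => by simp only [X, Prod.mk.injEq, and_assoc]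
  rcases (pr_nonneg μ {ω | A ω = a ∧ B ω = b ∧ V ω = v ∧ W ω = w}).eq_or_lt with h0 | hpos
  · rw [hq, ← h0, zero_mul, zero_mul]
  · rw [condPMI_pair_eq_add μ hW hWV hpos]

end MutualInformation

end MarginalTransfer

theorem conditional_mi_subadditivity_under_sums_general
    {Ω : Type*} [MeasurableSpace Ω] (μ : Measure Ω) [IsProbabilityMeasure μ]
    {𝒞 𝒟 : Type*}
    [Fintype 𝒞] [MeasurableSpace 𝒞] [MeasurableSingletonClass 𝒞]
    [Fintype 𝒟]
    (A B : Ω → ℝ) (C : Ω → 𝒞) (D : Ω → 𝒟)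
    (hA : Measurable A) (hB : Measurable B) (hC : Measurable C)
    (hAfin : (Set.range A).Finite) (hBfin : (Set.range B).Finite)
    (hAB_D : CondIndep μ A B D)
    (hAB_DC : CondIndep μ A B (fun ω => (D ω, C ω))) :
    condMI μ (fun ω => A ω + B ω) C D ≤ condMI μ A C D + condMI μ B C D :=
  calc condMI μ (fun ω => A ω + B ω) C D
      ≤ condMI μ (fun ω => (A ω, B ω)) C D :=
        condMI_comp_le μ hC (hA.prodMk hB)
          ((hAfin.prod hBfin).subset (Set.range_pair_subset A B)) fun p => p.1 + p.2
    _ = condMI μ A C D + condMI μ B C D :=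
        condMI_pair_eq_add_of_condIndep μ hA hB hAfin hBfin hAB_D hAB_DC

/-- **Conditional extension of the subadditivity inequality** (used in the proof
of Theorem A.1(d)).  Let `A` and `B` be random variables taking finitely many
real values and `C, D` finite-valued random variables.  If `A ⟂ B ∣ D` and
`A ⟂ B ∣ (D, C)`, then `I(A + B; C ∣ D) ≤ I(A; C ∣ D) + I(B; C ∣ D)`. -/
theorem conditional_mi_subadditivity_under_sums
    {Ω : Type*} [MeasurableSpace Ω] (μ : Measure Ω) [IsProbabilityMeasure μ]
    {𝒞 𝒟 : Type*}
    [Fintype 𝒞] [Nonempty 𝒞] [MeasurableSpace 𝒞] [MeasurableSingletonClass 𝒞]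
    [Fintype 𝒟] [Nonempty 𝒟] [MeasurableSpace 𝒟] [MeasurableSingletonClass 𝒟]
    (A B : Ω → ℝ) (C : Ω → 𝒞) (D : Ω → 𝒟)
    (hA : Measurable A) (hB : Measurable B) (hC : Measurable C) (hD : Measurable D)
    (hAfin : (Set.range A).Finite) (hBfin : (Set.range B).Finite)
    (hAB_D : CondIndep μ A B D)
    (hAB_DC : CondIndep μ A B (fun ω => (D ω, C ω))) :
    condMI μ (fun ω => A ω + B ω) C D ≤ condMI μ A C D + condMI μ B C D :=
  conditional_mi_subadditivity_under_sums_general μ A B C D hA hB hC hAfin hBfin hAB_D hAB_DC
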